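/- arXiv:2602.19600 — 4 statements merged into one kernel-verified Lean document; each statement's English description precedes it below -/
import Mathlib

section
/- Variance–mean bound for the excess loss: Under the assumptions ‖h*‖_∞ ≤ B and ‖h‖_∞ ≤ B, with ρ²(h*,h) := E[ℓ(·;h) − ℓ(·;h*)] the excess risk, one has Var(ℓ(·;h) − ℓ(·;h*)) ≤ (40 α_t² B²/σ_t⁴) · ρ²(h*,h). -/
open MeasureTheory ProbabilityTheory Real

/-- The standard Gaussian `N(0, I_D)` on `ℝ^D`. -/
noncomputable def stdGaussian (D : ℕ) : Measure (EuclideanSpace ℝ (Fin D)) :=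
  (Measure.pi fun _ : Fin D => gaussianReal 0 1).map
    (EuclideanSpace.equiv (Fin D) ℝ).symm

/-!
Conditional expectations of `B`-bounded variables are `B`-bounded, so `m_h(Y_t)`, `m₀(Y_t)` and
`Y₀` all lie in the ball of radius `B`. For such `a, b, y` the difference of squares
`‖a - y‖² - ‖b - y‖² = (‖a - y‖ - ‖b - y‖)(‖a - y‖ + ‖b - y‖)` is at most `4B‖a - b‖` in absolute
value, so the squared excess loss is pointwise at most `16 (α_t²/σ_t⁴)² B² ‖m_h(Y_t) - m₀(Y_t)‖²`;
bounding the variance by the second moment and integrating gives the claim with `16 ≤ 40`.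
-/

lemma sq_norm_sub_sq_sub_norm_sub_sq_le {E : Type*} [SeminormedAddCommGroup E] {a b y : E}
    {B : ℝ} (ha : ‖a‖ ≤ B) (hb : ‖b‖ ≤ B) (hy : ‖y‖ ≤ B) :
    (‖a - y‖ ^ 2 - ‖b - y‖ ^ 2) ^ 2 ≤ 16 * B ^ 2 * ‖a - b‖ ^ 2 := by
  have hay : ‖a - y‖ ≤ 2 * B := (norm_sub_le a y).trans (by linarith)
  have hby : ‖b - y‖ ≤ 2 * B := (norm_sub_le b y).trans (by linarith)
  have hdiff : |‖a - y‖ - ‖b - y‖| ≤ ‖a - b‖ := by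
    simpa using abs_norm_sub_norm_le (a - y) (b - y)
  calc (‖a - y‖ ^ 2 - ‖b - y‖ ^ 2) ^ 2
      = |‖a - y‖ - ‖b - y‖| ^ 2 * (‖a - y‖ + ‖b - y‖) ^ 2 := by rw [sq_abs]; ring
    _ ≤ ‖a - b‖ ^ 2 * (4 * B) ^ 2 := by gcongr; linarith
    _ = 16 * B ^ 2 * ‖a - b‖ ^ 2 := by ring

lemma ae_norm_le_of_condExp_ae_eq {Ω E : Type*} {m m₀ : MeasurableSpace Ω} {μ : Measure Ω}
    [NormedAddCommGroup E] [NormedSpace ℝ E] [CompleteSpace E] {f g : Ω → E} {B : ℝ}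
    (hfg : μ[f | m] =ᵐ[μ] g) (hf : ∀ᵐ ω ∂μ, ‖f ω‖ ≤ B) : ∀ᵐ ω ∂μ, ‖g ω‖ ≤ B := by
  filter_upwards [hfg, ae_bdd_norm_condExp_of_ae_bdd_norm hf] with ω hω hωB
  rwa [← hω]

lemma integrable_norm_sub_sq_of_ae_norm_le {Ω E : Type*} [MeasurableSpace Ω] {μ : Measure Ω}
    [IsFiniteMeasure μ] [NormedAddCommGroup E] {f g : Ω → E} {B : ℝ}
    (hf : AEStronglyMeasurable f μ) (hg : AEStronglyMeasurable g μ)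
    (hfB : ∀ᵐ ω ∂μ, ‖f ω‖ ≤ B) (hgB : ∀ᵐ ω ∂μ, ‖g ω‖ ≤ B) :
    Integrable (fun ω => ‖f ω - g ω‖ ^ 2) μ := by
  refine .of_bound ((hf.sub hg).norm.pow 2) ((2 * B) ^ 2) ?_
  filter_upwards [hfB, hgB] with ω hfω hgω
  rw [Real.norm_of_nonneg (by positivity)]
  gcongr
  exact (norm_sub_le _ _).trans (by linarith)

lemma variance_le_mul_integral_of_sq_le {Ω : Type*} [MeasurableSpace Ω] {μ : Measure Ω}
    [IsProbabilityMeasure μ] {X F : Ω → ℝ} (hX : AEStronglyMeasurable X μ)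
    (hF : Integrable F μ) (K : ℝ) (hXF : ∀ᵐ ω ∂μ, X ω ^ 2 ≤ K * F ω) :
    variance X μ ≤ K * ∫ ω, F ω ∂μ :=
  calc variance X μ ≤ ∫ ω, X ω ^ 2 ∂μ := by simpa using variance_le_expectation_sq hX
    _ ≤ ∫ ω, K * F ω ∂μ :=
      integral_mono_of_nonneg (.of_forall fun ω => sq_nonneg (X ω)) (hF.const_mul K) hXF
    _ = K * ∫ ω, F ω ∂μ := integral_const_mul K F

theorem variance_mean_bound_general {d D : ℕ} {Ω : Type*} [MeasurableSpace Ω]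
    (μ : Measure Ω) [IsProbabilityMeasure μ]
    (αt σt B : ℝ)
    (U : Ω → EuclideanSpace ℝ (Fin d)) (hU : Measurable U)
    (hstar h : EuclideanSpace ℝ (Fin d) → EuclideanSpace ℝ (Fin D))
    (hhstarB : ∀ u, ‖hstar u‖ ≤ B) (hhB : ∀ u, ‖h u‖ ≤ B)
    (hstarmeas : Measurable hstar)
    (Y0 Yt : Ω → EuclideanSpace ℝ (Fin D))
    (hY0 : ∀ ω, Y0 ω = hstar (U ω))
    (mh m0 : EuclideanSpace ℝ (Fin D) → EuclideanSpace ℝ (Fin D))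
    (hmh : μ[(fun ω => h (U ω)) | MeasurableSpace.comap Yt inferInstance]
      =ᵐ[μ] fun ω => mh (Yt ω))
    (hm0 : μ[Y0 | MeasurableSpace.comap Yt inferInstance]
      =ᵐ[μ] fun ω => m0 (Yt ω)) :
    variance (fun ω =>
        (αt ^ 2 / σt ^ 4) * ‖mh (Yt ω) - Y0 ω‖ ^ 2
          - (αt ^ 2 / σt ^ 4) * ‖m0 (Yt ω) - Y0 ω‖ ^ 2) μ
      ≤ (40 * αt ^ 2 * B ^ 2 / σt ^ 4) *
          ((αt ^ 2 / σt ^ 4) * ∫ ω, ‖mh (Yt ω) - m0 (Yt ω)‖ ^ 2 ∂μ) := by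
  set c := αt ^ 2 / σt ^ 4
  have hY0B (ω : Ω) : ‖Y0 ω‖ ≤ B := hY0 ω ▸ hhstarB (U ω)
  have hY0meas : AEStronglyMeasurable Y0 μ :=
    (funext hY0 ▸ hstarmeas.comp hU : Measurable Y0).aestronglyMeasurable
  have hmhB := ae_norm_le_of_condExp_ae_eq hmh (.of_forall fun ω => hhB (U ω))
  have hm0B := ae_norm_le_of_condExp_ae_eq hm0 (.of_forall hY0B)
  have hmhmeas : AEStronglyMeasurable (fun ω => mh (Yt ω)) μ :=
    integrable_condExp.aestronglyMeasurable.congr hmh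
  have hm0meas : AEStronglyMeasurable (fun ω => m0 (Yt ω)) μ :=
    integrable_condExp.aestronglyMeasurable.congr hm0
  have hpointwise : ∀ᵐ ω ∂μ,
      (c * ‖mh (Yt ω) - Y0 ω‖ ^ 2 - c * ‖m0 (Yt ω) - Y0 ω‖ ^ 2) ^ 2
        ≤ 16 * c ^ 2 * B ^ 2 * ‖mh (Yt ω) - m0 (Yt ω)‖ ^ 2 := by
    filter_upwards [hmhB, hm0B] with ω ha hb
    calc _ = c ^ 2 * (‖mh (Yt ω) - Y0 ω‖ ^ 2 - ‖m0 (Yt ω) - Y0 ω‖ ^ 2) ^ 2 := by ring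
      _ ≤ c ^ 2 * (16 * B ^ 2 * ‖mh (Yt ω) - m0 (Yt ω)‖ ^ 2) := by
        gcongr; exact sq_norm_sub_sq_sub_norm_sub_sq_le ha hb (hY0B ω)
      _ = _ := by ring
  have hloss_meas := (((hmhmeas.sub hY0meas).norm.pow 2).const_mul c).sub
    (((hm0meas.sub hY0meas).norm.pow 2).const_mul c)
  calc _ ≤ 16 * c ^ 2 * B ^ 2 * ∫ ω, ‖mh (Yt ω) - m0 (Yt ω)‖ ^ 2 ∂μ :=
        variance_le_mul_integral_of_sq_le hloss_meas
          (integrable_norm_sub_sq_of_ae_norm_le hmhmeas hm0meas hmhB hm0B) _ hpointwise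
    _ ≤ 40 * c ^ 2 * B ^ 2 * ∫ ω, ‖mh (Yt ω) - m0 (Yt ω)‖ ^ 2 ∂μ := by
        have : 0 ≤ ∫ ω, ‖mh (Yt ω) - m0 (Yt ω)‖ ^ 2 ∂μ := integral_nonneg fun ω => by positivity
        gcongr
        norm_num
    _ = _ := by ring

/-- Variance–mean bound for the excess loss: with `‖h*‖_∞ ≤ B`, `‖h‖_∞ ≤ B`, reduced
losses `ℓ(·;h) = (α_t²/σ_t⁴)‖m_h(Y_t) − Y₀‖²`, and excess risk
`ρ²(h*,h) = (α_t²/σ_t⁴) E‖m_h(Y_t) − m₀(Y_t)‖²`, one has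
`Var(ℓ(·;h) − ℓ(·;h*)) ≤ (40 α_t² B²/σ_t⁴) ρ²(h*,h)`. -/
theorem variance_mean_bound {d D : ℕ} {Ω : Type*} [MeasurableSpace Ω]
    (μ : Measure Ω) [IsProbabilityMeasure μ]
    (αt σt B : ℝ) (hα : 0 < αt) (hσ : 0 < σt) (hB : 0 ≤ B)
    (U : Ω → EuclideanSpace ℝ (Fin d)) (hU : Measurable U)
    (Z : Ω → EuclideanSpace ℝ (Fin D)) (hZ : Measurable Z)
    (hZlaw : μ.map Z = stdGaussian D)
    (hstar h : EuclideanSpace ℝ (Fin d) → EuclideanSpace ℝ (Fin D))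
    (hhstarB : ∀ u, ‖hstar u‖ ≤ B) (hhB : ∀ u, ‖h u‖ ≤ B)
    (hmeas : Measurable h) (hstarmeas : Measurable hstar)
    (hindep : IndepFun U Z μ)
    (Y0 Yt : Ω → EuclideanSpace ℝ (Fin D))
    (hY0 : ∀ ω, Y0 ω = hstar (U ω))
    (hYt : ∀ ω, Yt ω = αt • Y0 ω + σt • Z ω)
    (mh m0 : EuclideanSpace ℝ (Fin D) → EuclideanSpace ℝ (Fin D))
    (hmh : μ[(fun ω => h (U ω)) | MeasurableSpace.comap Yt inferInstance]
      =ᵐ[μ] fun ω => mh (Yt ω))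
    (hm0 : μ[Y0 | MeasurableSpace.comap Yt inferInstance]
      =ᵐ[μ] fun ω => m0 (Yt ω)) :
    variance (fun ω =>
        (αt ^ 2 / σt ^ 4) * ‖mh (Yt ω) - Y0 ω‖ ^ 2
          - (αt ^ 2 / σt ^ 4) * ‖m0 (Yt ω) - Y0 ω‖ ^ 2) μ
      ≤ (40 * αt ^ 2 * B ^ 2 / σt ^ 4) *
          ((αt ^ 2 / σt ^ 4) * ∫ ω, ‖mh (Yt ω) - m0 (Yt ω)‖ ^ 2 ∂μ) :=
  variance_mean_bound_general μ αt σt B U hU hstar h hhstarB hhB hstarmeas Y0 Yt hY0 mh m0 hmh hm0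
end

section
/- Lipschitz transfer for the softmax-weighted score map: Fix σ > 0. For x ∈ ℝ^D with ‖x‖ ≤ R_x and center tuples y = (y_1,…,y_K), y' = (y'_1,…,y'_K) with all ‖y_i‖, ‖y'_i‖ ≤ R_y, define g_y(x) = x/σ² − (1/σ²) Σ_i w_i(x; y) y_i where w(x; y) = softmax(s(x;y)) with s_i(x;y) = −‖x−y_i‖²/(2σ²). Then ‖g_y(x) − g_{y'}(x)‖ ≤ (C₀/σ²) max_i ‖y_i − y'_i‖ with C₀ = 1 + 2 R_y (R_x + R_y)/σ². -/
open Real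

/-- The softmax map on `ℝ^K`. -/
noncomputable def softmax {K : ℕ} (s : Fin K → ℝ) (i : Fin K) : ℝ :=
  Real.exp (s i) / ∑ j, Real.exp (s j)

/-- Gaussian logits of `x` against centers `y`. -/
noncomputable def gaussLogits {D K : ℕ} (σ : ℝ) (x : EuclideanSpace ℝ (Fin D))
    (y : Fin K → EuclideanSpace ℝ (Fin D)) (i : Fin K) : ℝ :=
  -‖x - y i‖ ^ 2 / (2 * σ ^ 2)

/-- The softmax-weighted score map `g_y(x) = x/σ² − (1/σ²) Σ_i w_i(x;y) y_i`. -/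
noncomputable def scoreMap {D K : ℕ} (σ : ℝ) (x : EuclideanSpace ℝ (Fin D))
    (y : Fin K → EuclideanSpace ℝ (Fin D)) : EuclideanSpace ℝ (Fin D) :=
  (σ ^ 2)⁻¹ • x - (σ ^ 2)⁻¹ • ∑ i, softmax (gaussLogits σ x y) i • y i

/-!
The score map depends on the centers through the softmax weights `w = softmax s` and through the
centers themselves, so `‖g_y(x) - g_{y'}(x)‖ ≤ σ⁻² (R_y ‖w - w'‖₁ + max_i ‖y_i - y'_i‖)`.
Each Gaussian logit moves by at most `(R_x + R_y)/σ² · ‖y_i - y'_i‖`, since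
`‖x - y_i‖² - ‖x - y'_i‖²` factors as a sum of norms times a difference of norms. Shifting the
logits by at most `δ` changes each softmax weight by a factor in `[e^{-2δ}, e^{2δ}]`, hence
`|w_i - w'_i| ≤ tanh δ · (w_i + w'_i) ≤ δ (w_i + w'_i)`, and summing gives `‖w - w'‖₁ ≤ 2δ`.
-/

/-- `tanh (t/2) ≤ t/2` for `t ≥ 0`, written without division. -/
theorem Real.two_mul_one_sub_exp_neg_le {t : ℝ} (ht : 0 ≤ t) :
    2 * (1 - exp (-t)) ≤ t * (1 + exp (-t)) := by
  rcases ht.eq_or_lt with rfl | ht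
  · simp
  set u := exp (-t)
  have hu : 0 < u := exp_pos _
  have hu1 : u < 1 := exp_lt_one_iff.2 (neg_lt_zero.2 ht)
  -- The first term of the series `log (1 + a⁻¹) = ∑ 2/(2k+1) (2a+1)^{-(2k+1)}`, at `1 + a⁻¹ = e^t`.
  set a := u / (1 - u) with ha_def
  have ha : 0 < a := div_pos hu (sub_pos.2 hu1)
  have hlog : log (1 + a⁻¹) = t := by
    rw [inv_div, show 1 + (1 - u) / u = u⁻¹ by field_simp; ring, ← exp_neg, neg_neg, log_exp]
  have h2a : 2 * a + 1 = (1 + u) / (1 - u) := by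
    rw [ha_def]
    field_simp [(sub_pos.2 hu1).ne']
    ring
  have hfirst := le_hasSum (hasSum_log_one_add_inv ha) 0 fun k _ => by positivity
  simp only [hlog, h2a, Nat.cast_zero, mul_zero, zero_add, div_one, pow_one, one_div, inv_div,
    mul_one] at hfirst
  rw [mul_div_assoc', div_le_iff₀ (by linarith)] at hfirst
  linarith

theorem abs_sub_le_of_exp_neg_mul_le {a b t : ℝ} (ha : 0 ≤ a) (hb : 0 ≤ b) (ht : 0 ≤ t)
    (hab : exp (-t) * a ≤ b) (hba : exp (-t) * b ≤ a) :
    2 * |a - b| ≤ t * (a + b) := by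
  have key := Real.two_mul_one_sub_exp_neg_le ht
  have hu := (exp_pos (-t)).le
  rcases le_total b a with h | h
  · rw [abs_of_nonneg (sub_nonneg.2 h)]
    nlinarith
  · rw [abs_of_nonpos (sub_nonpos.2 h)]
    nlinarith

theorem softmax_nonneg {K : ℕ} (s : Fin K → ℝ) (i : Fin K) : 0 ≤ softmax s i :=
  div_nonneg (exp_pos _).le (Finset.sum_nonneg fun _ _ => (exp_pos _).le)

theorem softmax_sum_le_one {K : ℕ} (s : Fin K → ℝ) : ∑ i, softmax s i ≤ 1 := by
  simp only [softmax, ← Finset.sum_div]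
  exact div_self_le_one _

theorem exp_neg_two_mul_mul_softmax_le {K : ℕ} (s s' : Fin K → ℝ) (i : Fin K) :
    exp (-(2 * ‖s - s'‖)) * softmax s i ≤ softmax s' i := by
  set δ := ‖s - s'‖
  have hclose : ∀ j, |s j - s' j| ≤ δ := fun j => by
    simpa [Real.norm_eq_abs] using norm_le_pi_norm (s - s') j
  have hpos : ∀ s : Fin K → ℝ, 0 < ∑ j, exp (s j) := fun s =>
    Finset.sum_pos (fun _ _ => exp_pos _) ⟨i, Finset.mem_univ _⟩
  have hnum : exp (s i) * exp (-δ) ≤ exp (s' i) := by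
    rw [← exp_add]
    exact exp_le_exp.2 (by linarith [(abs_le.1 (hclose i)).2])
  have hden : ∑ j, exp (s' j) ≤ exp δ * ∑ j, exp (s j) := by
    rw [Finset.mul_sum]
    gcongr with j
    rw [← exp_add]
    exact exp_le_exp.2 (by linarith [(abs_le.1 (hclose j)).1])
  calc exp (-(2 * δ)) * softmax s i = exp (s i) * exp (-δ) / (exp δ * ∑ j, exp (s j)) := by
        rw [softmax, show -(2 * δ) = -δ + -δ by ring, exp_add, exp_neg δ]
        field_simp
    _ ≤ exp (s' i) / ∑ j, exp (s' j) := div_le_div₀ (exp_pos _).le hnum (hpos s') hden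

theorem sum_abs_softmax_sub_le {K : ℕ} (s s' : Fin K → ℝ) :
    ∑ i, |softmax s i - softmax s' i| ≤ 2 * ‖s - s'‖ := by
  have hpointwise : ∀ i, 2 * |softmax s i - softmax s' i|
      ≤ 2 * ‖s - s'‖ * (softmax s i + softmax s' i) := fun i =>
    abs_sub_le_of_exp_neg_mul_le (softmax_nonneg s i) (softmax_nonneg s' i) (by positivity)
      (exp_neg_two_mul_mul_softmax_le s s' i)
      (by simpa only [norm_sub_rev] using exp_neg_two_mul_mul_softmax_le s' s i)
  have hsum := Finset.sum_le_sum fun i (_ : i ∈ Finset.univ) => hpointwise i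
  rw [← Finset.mul_sum, ← Finset.mul_sum, Finset.sum_add_distrib] at hsum
  nlinarith [softmax_sum_le_one s, softmax_sum_le_one s', norm_nonneg (s - s')]

theorem abs_sq_norm_sub_sq_norm_le {E : Type*} [SeminormedAddCommGroup E] (u v : E) :
    |‖u‖ ^ 2 - ‖v‖ ^ 2| ≤ (‖u‖ + ‖v‖) * ‖u - v‖ := by
  rw [sq_sub_sq, abs_mul, abs_of_nonneg (by positivity)]
  exact mul_le_mul_of_nonneg_left (abs_norm_sub_norm_le u v) (by positivity)

theorem abs_gaussLogits_sub_le {D K : ℕ} {σ Rx Ry : ℝ} {x : EuclideanSpace ℝ (Fin D)}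
    {y y' : Fin K → EuclideanSpace ℝ (Fin D)} (hx : ‖x‖ ≤ Rx) (i : Fin K)
    (hy : ‖y i‖ ≤ Ry) (hy' : ‖y' i‖ ≤ Ry) :
    |gaussLogits σ x y i - gaussLogits σ x y' i| ≤ (Rx + Ry) / σ ^ 2 * ‖y i - y' i‖ := by
  have hdiff : gaussLogits σ x y i - gaussLogits σ x y' i
      = (‖x - y' i‖ ^ 2 - ‖x - y i‖ ^ 2) / (2 * σ ^ 2) := by
    simp only [gaussLogits]
    ring
  have hsq := abs_sq_norm_sub_sq_norm_le (x - y' i) (x - y i)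
  rw [sub_sub_sub_cancel_left] at hsq
  have hsum : ‖x - y' i‖ + ‖x - y i‖ ≤ 2 * (Rx + Ry) := by
    linarith [norm_sub_le x (y i), norm_sub_le x (y' i)]
  rw [hdiff, abs_div, abs_of_nonneg (show 0 ≤ 2 * σ ^ 2 by positivity)]
  calc |‖x - y' i‖ ^ 2 - ‖x - y i‖ ^ 2| / (2 * σ ^ 2)
      ≤ 2 * (Rx + Ry) * ‖y i - y' i‖ / (2 * σ ^ 2) := by
        gcongr
        exact hsq.trans (mul_le_mul_of_nonneg_right hsum (norm_nonneg _))
    _ = (Rx + Ry) / σ ^ 2 * ‖y i - y' i‖ := by ring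

theorem norm_gaussLogits_sub_le {D K : ℕ} [Nonempty (Fin K)] {σ Rx Ry : ℝ}
    {x : EuclideanSpace ℝ (Fin D)} {y y' : Fin K → EuclideanSpace ℝ (Fin D)} (hx : ‖x‖ ≤ Rx)
    (hy : ∀ i, ‖y i‖ ≤ Ry) (hy' : ∀ i, ‖y' i‖ ≤ Ry) :
    ‖gaussLogits σ x y - gaussLogits σ x y'‖ ≤ (Rx + Ry) / σ ^ 2 * ‖y - y'‖ := by
  refine (pi_norm_le_iff_of_nonempty _).2 fun i => ?_
  have hRxy : 0 ≤ Rx + Ry := by linarith [(norm_nonneg x).trans hx, (norm_nonneg _).trans (hy i)]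
  calc ‖(gaussLogits σ x y - gaussLogits σ x y') i‖
      ≤ (Rx + Ry) / σ ^ 2 * ‖y i - y' i‖ := abs_gaussLogits_sub_le hx i (hy i) (hy' i)
    _ ≤ (Rx + Ry) / σ ^ 2 * ‖y - y'‖ := by
        gcongr
        exact norm_le_pi_norm (y - y') i

theorem norm_sum_smul_sub_sum_smul_le {ι E : Type*} [Fintype ι] [SeminormedAddCommGroup E]
    [NormedSpace ℝ E] {w w' : ι → ℝ} {y y' : ι → E} {R : ℝ} (hw' : ∀ i, 0 ≤ w' i)
    (hw'_sum : ∑ i, w' i ≤ 1) (hy : ∀ i, ‖y i‖ ≤ R) :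
    ‖∑ i, w i • y i - ∑ i, w' i • y' i‖ ≤ R * ∑ i, |w i - w' i| + ‖y - y'‖ := by
  have hsplit : ∑ i, w i • y i - ∑ i, w' i • y' i
      = ∑ i, (w i - w' i) • y i + ∑ i, w' i • (y i - y' i) := by
    simp only [sub_smul, smul_sub, Finset.sum_sub_distrib]
    abel
  have hweights : ‖∑ i, (w i - w' i) • y i‖ ≤ R * ∑ i, |w i - w' i| := by
    rw [Finset.mul_sum]
    refine (norm_sum_le _ _).trans (Finset.sum_le_sum fun i _ => ?_)
    rw [norm_smul, Real.norm_eq_abs, mul_comm]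
    exact mul_le_mul_of_nonneg_right (hy i) (abs_nonneg _)
  have hcenters : ‖∑ i, w' i • (y i - y' i)‖ ≤ ‖y - y'‖ :=
    calc ‖∑ i, w' i • (y i - y' i)‖ ≤ ∑ i, w' i * ‖y - y'‖ := by
          refine (norm_sum_le _ _).trans (Finset.sum_le_sum fun i _ => ?_)
          rw [norm_smul, Real.norm_eq_abs, abs_of_nonneg (hw' i)]
          exact mul_le_mul_of_nonneg_left (norm_le_pi_norm (y - y') i) (hw' i)
      _ ≤ ‖y - y'‖ := by
          rw [← Finset.sum_mul]
          exact mul_le_of_le_one_left (norm_nonneg _) hw'_sum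
  rw [hsplit]
  exact (norm_add_le _ _).trans (add_le_add hweights hcenters)

theorem norm_scoreMap_sub_scoreMap {D K : ℕ} (σ : ℝ) (x : EuclideanSpace ℝ (Fin D))
    (y y' : Fin K → EuclideanSpace ℝ (Fin D)) :
    ‖scoreMap σ x y - scoreMap σ x y'‖ = (σ ^ 2)⁻¹ *
      ‖∑ i, softmax (gaussLogits σ x y) i • y i - ∑ i, softmax (gaussLogits σ x y') i • y' i‖ := by
  rw [scoreMap, scoreMap, sub_sub_sub_cancel_left, ← smul_sub, norm_smul, norm_sub_rev,
    Real.norm_of_nonneg (by positivity)]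

theorem scoreMap_lipschitz_in_centers_general {D K : ℕ} (σ Rx Ry : ℝ)
    (x : EuclideanSpace ℝ (Fin D)) (hx : ‖x‖ ≤ Rx)
    (y y' : Fin K → EuclideanSpace ℝ (Fin D))
    (hy : ∀ i, ‖y i‖ ≤ Ry) (hy' : ∀ i, ‖y' i‖ ≤ Ry) :
    ‖scoreMap σ x y - scoreMap σ x y'‖
      ≤ ((1 + 2 * Ry * (Rx + Ry) / σ ^ 2) / σ ^ 2) * ‖y - y'‖ := by
  rcases isEmpty_or_nonempty (Fin K) with hK | hK
  · simp [Subsingleton.elim y y']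
  have hRy : 0 ≤ Ry := (norm_nonneg _).trans (hy (Classical.arbitrary _))
  set w := softmax (gaussLogits σ x y)
  set w' := softmax (gaussLogits σ x y')
  have hweights : ∑ i, |w i - w' i| ≤ 2 * ((Rx + Ry) / σ ^ 2 * ‖y - y'‖) :=
    (sum_abs_softmax_sub_le _ _).trans (by gcongr; exact norm_gaussLogits_sub_le hx hy hy')
  calc ‖scoreMap σ x y - scoreMap σ x y'‖
      = (σ ^ 2)⁻¹ * ‖∑ i, w i • y i - ∑ i, w' i • y' i‖ := norm_scoreMap_sub_scoreMap σ x y y'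
    _ ≤ (σ ^ 2)⁻¹ * (Ry * ∑ i, |w i - w' i| + ‖y - y'‖) := by
        gcongr
        exact norm_sum_smul_sub_sum_smul_le (softmax_nonneg _) (softmax_sum_le_one _) hy
    _ ≤ (σ ^ 2)⁻¹ * (Ry * (2 * ((Rx + Ry) / σ ^ 2 * ‖y - y'‖)) + ‖y - y'‖) := by gcongr
    _ = ((1 + 2 * Ry * (Rx + Ry) / σ ^ 2) / σ ^ 2) * ‖y - y'‖ := by ring

/-- Lipschitz transfer for the softmax-weighted score map:
`‖g_y(x) − g_{y'}(x)‖ ≤ (C₀/σ²) max_i ‖y_i − y'_i‖` with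
`C₀ = 1 + 2 R_y (R_x + R_y)/σ²`. -/
theorem scoreMap_lipschitz_in_centers {D K : ℕ} (σ Rx Ry : ℝ) (hσ : 0 < σ)
    (x : EuclideanSpace ℝ (Fin D)) (hx : ‖x‖ ≤ Rx)
    (y y' : Fin K → EuclideanSpace ℝ (Fin D))
    (hy : ∀ i, ‖y i‖ ≤ Ry) (hy' : ∀ i, ‖y' i‖ ≤ Ry) :
    ‖scoreMap σ x y - scoreMap σ x y'‖
      ≤ ((1 + 2 * Ry * (Rx + Ry) / σ ^ 2) / σ ^ 2) * ‖y - y'‖ :=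
  scoreMap_lipschitz_in_centers_general σ Rx Ry x hx y y' hy hy'
end

section
/- Self-normalized importance sampling error bound: Let q, p be probability densities on ℝ^d with p ≪ q, w = p/q, and h : ℝ^d → ℝ^D measurable with ‖h(u)‖ ≤ B for all u. Let U_1,…,U_K be i.i.d. ∼ q, A_K = (1/K)Σ_i w(U_i) h(U_i), B_K = (1/K)Σ_i w(U_i), and m = E_p[h(U)]. Then E‖A_K/B_K − m‖² ≤ (32 B²/K) D₂(p‖q), where D₂(p‖q) = E_q[(p/q)²] = 1 + χ²(p‖q). -/
/-!
The estimate is `B_K⁻¹ • A_K`, where `A_K` and `B_K` are the sample means under `q` of `w • h` and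
of `w`, whose means are `m` and `1`. Pointwise,
`‖B_K⁻¹ • A_K - m‖² ≤ 8 ‖A_K - m‖² + 16 B² (B_K - 1)²`: if `B_K ≥ 1/2`, write
`B_K⁻¹ • A_K - m = B_K⁻¹ • ((A_K - m) - (B_K - 1) • m)`; if `B_K < 1/2`, the left side is at most
`4 B²` because `B_K⁻¹ • A_K` is a convex combination of values of `h`, while `(B_K - 1)² ≥ 1/4`.
The two terms on the right are variances of sample means of `K` i.i.d. variables, so their
expectations are at most `B² E_q[w²] / K` and `E_q[w²] / K`, and `E_q[w²] = D₂(p‖q)`.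
-/

open MeasureTheory ProbabilityTheory
open scoped ENNReal

noncomputable def sampleMean {α E : Type*} [AddCommMonoid E] [Module ℝ E] (K : ℕ) (f : α → E)
    (x : Fin K → α) : E :=
  (1 / (K : ℝ)) • ∑ i, f (x i)

noncomputable def selfNormalizedMean {α E : Type*} [AddCommGroup E] [Module ℝ E] (K : ℕ)
    (w : α → ℝ) (h : α → E) (x : Fin K → α) : E :=
  (sampleMean K w x)⁻¹ • sampleMean K (fun u => w u • h u) x

theorem norm_sampleMean_smul_le {α E : Type*} {K : ℕ} [SeminormedAddCommGroup E] [NormedSpace ℝ E]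
    {w : α → ℝ} {h : α → E} {B : ℝ} (hw : ∀ u, 0 ≤ w u) (hh : ∀ u, ‖h u‖ ≤ B)
    (x : Fin K → α) : ‖sampleMean K (fun u => w u • h u) x‖ ≤ sampleMean K w x * B := by
  unfold sampleMean
  rw [norm_smul, smul_eq_mul, mul_assoc, Finset.sum_mul, Real.norm_of_nonneg (by positivity)]
  gcongr
  refine (norm_sum_le _ _).trans (Finset.sum_le_sum fun i _ => ?_)
  rw [norm_smul, Real.norm_of_nonneg (hw _)]
  exact mul_le_mul_of_nonneg_left (hh _) (hw _)

theorem norm_sq_inv_smul_sub_le {E : Type*} [SeminormedAddCommGroup E] [NormedSpace ℝ E]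
    {v m : E} {s B : ℝ} (hs : 0 ≤ s) (hm : ‖m‖ ≤ B) (hv : ‖v‖ ≤ s * B) :
    ‖s⁻¹ • v - m‖ ^ 2 ≤ 8 * ‖v - m‖ ^ 2 + 16 * B ^ 2 * (s - 1) ^ 2 := by
  rcases le_or_gt (1 / 2) s with hs2 | hs2
  · have hs0 : s ≠ 0 := by positivity
    have hdecomp : s⁻¹ • v - m = s⁻¹ • ((v - m) - (s - 1) • m) := by
      rw [sub_smul, one_smul, sub_sub_sub_cancel_right, smul_sub, inv_smul_smul₀ hs0]
    have hnorm : ‖s⁻¹ • v - m‖ ≤ 2 * (‖v - m‖ + |s - 1| * B) := by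
      rw [hdecomp, norm_smul, Real.norm_of_nonneg (inv_nonneg.2 hs)]
      gcongr
      · exact inv_le_of_inv_le₀ (by norm_num) (by linarith)
      · refine (norm_sub_le _ _).trans ?_
        rw [norm_smul, Real.norm_eq_abs]
        gcongr
    have hsq : (|s - 1| * B) ^ 2 = B ^ 2 * (s - 1) ^ 2 := by rw [mul_pow, sq_abs]; ring
    nlinarith [pow_le_pow_left₀ (norm_nonneg _) hnorm 2, sq_nonneg (‖v - m‖ - |s - 1| * B),
      sq_nonneg (s - 1), sq_nonneg B]
  · have hvs : ‖s⁻¹ • v‖ ≤ B := by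
      rcases hs.eq_or_lt with rfl | hs0
      · simpa using (norm_nonneg m).trans hm
      · rw [norm_smul, Real.norm_of_nonneg (inv_nonneg.2 hs), inv_mul_le_iff₀ hs0]
        exact hv
    have hnorm : ‖s⁻¹ • v - m‖ ≤ 2 * B := (norm_sub_le _ _).trans (by linarith)
    have hs1 : 1 / 4 ≤ (s - 1) ^ 2 := by nlinarith
    nlinarith [pow_le_pow_left₀ (norm_nonneg _) hnorm 2, sq_nonneg ‖v - m‖,
      mul_le_mul_of_nonneg_left hs1 (sq_nonneg B)]

section SampleMean

variable {α : Type*} [MeasurableSpace α] {μ : Measure α} [IsProbabilityMeasure μ] {K : ℕ}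

theorem memLp_sampleMean {E : Type*} [NormedAddCommGroup E] [NormedSpace ℝ E] {p : ℝ≥0∞}
    {f : α → E} (hf : MemLp f p μ) : MemLp (sampleMean K f) p (Measure.pi fun _ => μ) :=
  (memLp_finsetSum _ fun i _ =>
    hf.comp_measurePreserving (measurePreserving_eval _ i)).const_smul (1 / (K : ℝ))

theorem integral_sampleMean {E : Type*} [NormedAddCommGroup E] [NormedSpace ℝ E] [CompleteSpace E]
    (hK : K ≠ 0) {f : α → E} (hf : Integrable f μ) :
    ∫ x, sampleMean K f x ∂(Measure.pi fun _ => μ) = ∫ a, f a ∂μ := by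
  have hfi : ∀ i, ∫ x : Fin K → α, f (x i) ∂(Measure.pi fun _ => μ) = ∫ a, f a ∂μ :=
    fun i => integral_comp_eval hf.aestronglyMeasurable
  unfold sampleMean
  rw [integral_smul, integral_finsetSum _ fun i _ => integrable_comp_eval hf]
  simp only [hfi, Finset.sum_const, Finset.card_univ, Fintype.card_fin, ← Nat.cast_smul_eq_nsmul ℝ,
    smul_smul]
  rw [one_div, inv_mul_cancel₀ (by exact_mod_cast hK), one_smul]

theorem variance_sampleMean (hK : K ≠ 0) {f : α → ℝ} (hf : MemLp f 2 μ) :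
    Var[sampleMean K f; Measure.pi fun _ => μ] = Var[f; μ] / K := by
  set X : Fin K → (Fin K → α) → ℝ := fun i x => f (x i)
  have hX : ∀ i, MemLp (X i) 2 (Measure.pi fun _ => μ) :=
    fun i => hf.comp_measurePreserving (measurePreserving_eval _ i)
  have hXvar : ∀ i, Var[X i; Measure.pi fun _ => μ] = Var[f; μ] := fun i => by
    have hmap := (measurePreserving_eval (fun _ => μ) i).map_eq
    have := variance_map (X := f) (by rw [hmap]; exact hf.aemeasurable)
      (measurable_pi_apply i).aemeasurable
    rw [hmap] at this
    exact this.symm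
  have hindep : iIndepFun X (Measure.pi fun _ => μ) := iIndepFun_pi fun _ => hf.aemeasurable
  have hsum : sampleMean K f = (1 / (K : ℝ)) • ∑ i, X i := by
    ext x; simp [sampleMean, X, Finset.sum_apply]
  rw [hsum, variance_smul, IndepFun.variance_sum (fun i _ => hX i)
    (fun i _ j _ hij => hindep.indepFun hij)]
  simp only [hXvar, Finset.sum_const, Finset.card_univ, Fintype.card_fin, nsmul_eq_mul]
  field_simp

theorem integral_sq_sampleMean_sub (hK : K ≠ 0) {f : α → ℝ} (hf : MemLp f 2 μ) :
    ∫ x, (sampleMean K f x - ∫ a, f a ∂μ) ^ 2 ∂(Measure.pi fun _ => μ) = Var[f; μ] / K := by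
  rw [← variance_sampleMean hK hf, variance_eq_integral (memLp_sampleMean hf).aemeasurable,
    integral_sampleMean hK (hf.integrable one_le_two)]

theorem integral_sq_sampleMean_sub_le (hK : K ≠ 0) {f : α → ℝ} (hf : MemLp f 2 μ) :
    ∫ x, (sampleMean K f x - ∫ a, f a ∂μ) ^ 2 ∂(Measure.pi fun _ => μ) ≤ (∫ a, f a ^ 2 ∂μ) / K := by
  rw [integral_sq_sampleMean_sub hK hf]
  gcongr
  exact variance_le_expectation_sq hf.aestronglyMeasurable

theorem integral_norm_sq_sampleMean_sub_le {ι : Type*} [Fintype ι] (hK : K ≠ 0)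
    {g : α → EuclideanSpace ℝ ι} (hg : MemLp g 2 μ) :
    ∫ x, ‖sampleMean K g x - ∫ a, g a ∂μ‖ ^ 2 ∂(Measure.pi fun _ => μ)
      ≤ (∫ a, ‖g a‖ ^ 2 ∂μ) / K := by
  have hcoord : ∀ k, MemLp (fun a => g a k) 2 μ := memLp_piLp_iff.1 hg
  have hsq : ∀ k, Integrable (fun x => (sampleMean K (fun a => g a k) x - ∫ a, g a k ∂μ) ^ 2)
      (Measure.pi fun _ => μ) :=
    fun k => ((memLp_sampleMean (hcoord k)).sub (memLp_const _)).integrable_sq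
  have hnorm : ∀ x, ‖sampleMean K g x - ∫ a, g a ∂μ‖ ^ 2
      = ∑ k, (sampleMean K (fun a => g a k) x - ∫ a, g a k ∂μ) ^ 2 := fun x => by
    simp [EuclideanSpace.real_norm_sq_eq, sampleMean, Finset.sum_apply,
      eval_integral_piLp fun k => (hcoord k).integrable one_le_two]
  calc ∫ x, ‖sampleMean K g x - ∫ a, g a ∂μ‖ ^ 2 ∂(Measure.pi fun _ => μ)
      = ∑ k, ∫ x, (sampleMean K (fun a => g a k) x - ∫ a, g a k ∂μ) ^ 2
          ∂(Measure.pi fun _ => μ) := by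
        simp_rw [hnorm]
        exact integral_finsetSum _ fun k _ => hsq k
    _ ≤ ∑ k, (∫ a, g a k ^ 2 ∂μ) / K :=
        Finset.sum_le_sum fun k _ => integral_sq_sampleMean_sub_le hK (hcoord k)
    _ = (∫ a, ‖g a‖ ^ 2 ∂μ) / K := by
        rw [← Finset.sum_div, ← integral_finsetSum _ fun k _ => (hcoord k).integrable_sq]
        simp_rw [EuclideanSpace.real_norm_sq_eq]

theorem integral_norm_sq_sampleMean_smul_sub_le {ι : Type*} [Fintype ι] (hK : K ≠ 0)
    {w : α → ℝ} (hw : MemLp w 2 μ) {h : α → EuclideanSpace ℝ ι} {B : ℝ}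
    (hh : AEStronglyMeasurable h μ) (hhB : ∀ u, ‖h u‖ ≤ B) :
    ∫ x, ‖sampleMean K (fun u => w u • h u) x - ∫ u, w u • h u ∂μ‖ ^ 2 ∂(Measure.pi fun _ => μ)
      ≤ B ^ 2 * (∫ u, w u ^ 2 ∂μ) / K := by
  have hwh : MemLp (fun u => w u • h u) 2 μ := (memLp_top_of_bound hh B (ae_of_all _ hhB)).smul hw
  refine (integral_norm_sq_sampleMean_sub_le hK hwh).trans
    (div_le_div_of_nonneg_right ?_ K.cast_nonneg)
  rw [← integral_const_mul]
  refine integral_mono (hwh.integrable_norm_pow' (p := 2)) (hw.integrable_sq.const_mul _)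
    fun u => ?_
  rw [norm_smul, mul_pow, Real.norm_eq_abs, sq_abs, mul_comm]
  gcongr
  exact hhB u

theorem integral_norm_sq_selfNormalizedMean_sub_le {ι : Type*} [Fintype ι] (hK : K ≠ 0)
    {w : α → ℝ} (hw0 : ∀ u, 0 ≤ w u) (hw : MemLp w 2 μ) (hw1 : ∫ u, w u ∂μ = 1)
    {h : α → EuclideanSpace ℝ ι} {B : ℝ} (hh : AEStronglyMeasurable h μ) (hhB : ∀ u, ‖h u‖ ≤ B) :
    ∫ x, ‖selfNormalizedMean K w h x - ∫ u, w u • h u ∂μ‖ ^ 2 ∂(Measure.pi fun _ => μ)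
      ≤ 24 * B ^ 2 * (∫ u, w u ^ 2 ∂μ) / K := by
  set m := ∫ u, w u • h u ∂μ
  have hwh : MemLp (fun u => w u • h u) 2 μ := (memLp_top_of_bound hh B (ae_of_all _ hhB)).smul hw
  have hmB : ‖m‖ ≤ B := by
    have := norm_integral_le_of_norm_le (f := fun u => w u • h u)
      ((hw.integrable one_le_two).mul_const B)
      (ae_of_all _ fun u => by
        rw [norm_smul, Real.norm_of_nonneg (hw0 u)]
        exact mul_le_mul_of_nonneg_left (hhB u) (hw0 u))
    rwa [integral_mul_const, hw1, one_mul] at this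
  have hA := integral_norm_sq_sampleMean_smul_sub_le hK hw hh hhB
  have hBK : ∫ x, (sampleMean K w x - 1) ^ 2 ∂(Measure.pi fun _ => μ) ≤ (∫ u, w u ^ 2 ∂μ) / K := by
    simpa only [hw1] using integral_sq_sampleMean_sub_le hK hw
  have hAint : Integrable (fun x => ‖sampleMean K (fun u => w u • h u) x - m‖ ^ 2)
      (Measure.pi fun _ => μ) :=
    ((memLp_sampleMean hwh).sub (memLp_const m)).integrable_norm_pow' (p := 2)
  have hBKint : Integrable (fun x => (sampleMean K w x - 1) ^ 2) (Measure.pi fun _ => μ) :=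
    ((memLp_sampleMean hw).sub (memLp_const 1)).integrable_sq
  have hpointwise : ∀ x, ‖selfNormalizedMean K w h x - m‖ ^ 2
      ≤ 8 * ‖sampleMean K (fun u => w u • h u) x - m‖ ^ 2
        + 16 * B ^ 2 * (sampleMean K w x - 1) ^ 2 := fun x =>
    norm_sq_inv_smul_sub_le (mul_nonneg (by positivity) (Finset.sum_nonneg fun i _ => hw0 _))
      hmB (norm_sampleMean_smul_le hw0 hhB x)
  calc _ ≤ ∫ x, (8 * ‖sampleMean K (fun u => w u • h u) x - m‖ ^ 2
          + 16 * B ^ 2 * (sampleMean K w x - 1) ^ 2) ∂(Measure.pi fun _ => μ) :=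
        integral_mono_of_nonneg (ae_of_all _ fun _ => by positivity)
          ((hAint.const_mul 8).add (hBKint.const_mul _)) (ae_of_all _ hpointwise)
    _ = 8 * ∫ x, ‖sampleMean K (fun u => w u • h u) x - m‖ ^ 2 ∂(Measure.pi fun _ => μ)
          + 16 * B ^ 2 * ∫ x, (sampleMean K w x - 1) ^ 2 ∂(Measure.pi fun _ => μ) := by
        rw [integral_add (hAint.const_mul 8) (hBKint.const_mul _), integral_const_mul,
          integral_const_mul]
    _ ≤ 8 * (B ^ 2 * (∫ u, w u ^ 2 ∂μ) / K) + 16 * B ^ 2 * ((∫ u, w u ^ 2 ∂μ) / K) := by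
        gcongr
    _ = 24 * B ^ 2 * (∫ u, w u ^ 2 ∂μ) / K := by ring

end SampleMean

section WithDensityOfReal

variable {α : Type*} [MeasurableSpace α] {ν : Measure α} {q : α → ℝ}

theorem isProbabilityMeasure_withDensity_ofReal (hq0 : 0 ≤ᵐ[ν] q) (hq : Integrable q ν)
    (hq1 : ∫ u, q u ∂ν = 1) : IsProbabilityMeasure (ν.withDensity fun u => ENNReal.ofReal (q u)) :=
  ⟨by rw [withDensity_apply _ MeasurableSet.univ, setLIntegral_univ,
    ← ofReal_integral_eq_lintegral_ofReal hq hq0, hq1, ENNReal.ofReal_one]⟩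

variable {E : Type*} [NormedAddCommGroup E] [NormedSpace ℝ E]

theorem integrable_withDensity_ofReal_iff (hq : Measurable q) (hq0 : 0 ≤ᵐ[ν] q) {f : α → E} :
    Integrable f (ν.withDensity fun u => ENNReal.ofReal (q u))
      ↔ Integrable (fun u => q u • f u) ν := by
  rw [integrable_withDensity_iff_integrable_smul' hq.ennreal_ofReal
    (ae_of_all _ fun _ => ENNReal.ofReal_lt_top)]
  exact integrable_congr (hq0.mono fun u hu => by simp [ENNReal.toReal_ofReal hu])

theorem integral_withDensity_ofReal (hq : Measurable q) (hq0 : 0 ≤ᵐ[ν] q) (f : α → E) :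
    ∫ u, f u ∂(ν.withDensity fun u => ENNReal.ofReal (q u)) = ∫ u, q u • f u ∂ν := by
  rw [integral_withDensity_eq_integral_toReal_smul hq.ennreal_ofReal
    (ae_of_all _ fun _ => ENNReal.ofReal_lt_top)]
  exact integral_congr_ae (hq0.mono fun u hu => by simp [ENNReal.toReal_ofReal hu])

end WithDensityOfReal

theorem snis_error_bound_general {d D K : ℕ} (hK : 0 < K) (B : ℝ)
    (p q : EuclideanSpace ℝ (Fin d) → ℝ)
    (hp0 : ∀ u, 0 ≤ p u) (hq0 : ∀ u, 0 ≤ q u)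
    (hpmeas : Measurable p) (hqmeas : Measurable q)
    (hp1 : ∫ u, p u = 1) (hq1 : ∫ u, q u = 1)
    (hqint : Integrable q)
    (habs : ∀ u, q u = 0 → p u = 0)
    (h : EuclideanSpace ℝ (Fin d) → EuclideanSpace ℝ (Fin D))
    (hmeas : Measurable h) (hhB : ∀ u, ‖h u‖ ≤ B)
    (m : EuclideanSpace ℝ (Fin D)) (hm : m = ∫ u, p u • h u)
    (D2 : ℝ) (hD2 : D2 = ∫ u, (p u) ^ 2 / q u)
    (hD2int : Integrable (fun u => (p u) ^ 2 / q u)) :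
    (∫ U : Fin K → EuclideanSpace ℝ (Fin d),
        ‖((1 / (K : ℝ)) * ∑ i, p (U i) / q (U i))⁻¹ •
            ((1 / (K : ℝ)) • ∑ i, (p (U i) / q (U i)) • h (U i)) - m‖ ^ 2
      ∂(Measure.pi fun _ => volume.withDensity fun u => ENNReal.ofReal (q u)))
    ≤ 32 * B ^ 2 / (K : ℝ) * D2 := by
  set μ := volume.withDensity fun u => ENNReal.ofReal (q u)
  have hq0' : 0 ≤ᵐ[volume] q := ae_of_all _ hq0
  have : IsProbabilityMeasure μ := isProbabilityMeasure_withDensity_ofReal hq0' hqint hq1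
  set w := fun u => p u / q u
  have hqw : ∀ u, q u * w u = p u := fun u => mul_div_cancel_of_imp' (habs u)
  have hqw2 : ∀ u, q u • w u ^ 2 = p u ^ 2 / q u := fun u => by
    rw [smul_eq_mul, sq (w u), ← mul_assoc, hqw u, ← mul_div_assoc, ← sq]
  have hw : MemLp w 2 μ := by
    refine (memLp_two_iff_integrable_sq (hpmeas.div hqmeas).aestronglyMeasurable).2 ?_
    rw [integrable_withDensity_ofReal_iff hqmeas hq0']
    exact hD2int.congr (ae_of_all _ fun u => (hqw2 u).symm)
  have hw1 : ∫ u, w u ∂μ = 1 := by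
    rw [integral_withDensity_ofReal hqmeas hq0']
    simp_rw [smul_eq_mul, hqw]
    exact hp1
  have hwD2 : ∫ u, w u ^ 2 ∂μ = D2 := by
    rw [integral_withDensity_ofReal hqmeas hq0', hD2]
    simp_rw [hqw2]
  have hwm : ∫ u, w u • h u ∂μ = m := by
    rw [integral_withDensity_ofReal hqmeas hq0', hm]
    simp_rw [smul_smul, hqw]
  have hD2_nonneg : 0 ≤ D2 := hwD2 ▸ integral_nonneg fun u => sq_nonneg (w u)
  calc _ = ∫ x, ‖selfNormalizedMean K w h x - ∫ u, w u • h u ∂μ‖ ^ 2 ∂(Measure.pi fun _ => μ) := by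
          rw [hwm]; rfl
    _ ≤ 24 * B ^ 2 * (∫ u, w u ^ 2 ∂μ) / K := integral_norm_sq_selfNormalizedMean_sub_le hK.ne'
          (fun u => div_nonneg (hp0 u) (hq0 u)) hw hw1 hmeas.aestronglyMeasurable hhB
    _ = 24 * B ^ 2 * D2 / K := by rw [hwD2]
    _ ≤ 32 * B ^ 2 / K * D2 := by
        rw [div_mul_eq_mul_div]
        gcongr
        norm_num

/-- Self-normalized importance sampling error bound: with `p ≪ q`, `w = p/q`,
`‖h‖ ≤ B`, i.i.d. anchors `U_1,…,U_K ∼ q`, `A_K = (1/K)Σ w(U_i) h(U_i)`,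
`B_K = (1/K)Σ w(U_i)`, and `m = E_p[h(U)]`,
`E‖A_K/B_K − m‖² ≤ (32 B²/K) D₂(p‖q)` where `D₂(p‖q) = E_q[(p/q)²]`. -/
theorem snis_error_bound {d D K : ℕ} (hK : 0 < K) (B : ℝ) (hB : 0 ≤ B)
    (p q : EuclideanSpace ℝ (Fin d) → ℝ)
    (hp0 : ∀ u, 0 ≤ p u) (hq0 : ∀ u, 0 ≤ q u)
    (hpmeas : Measurable p) (hqmeas : Measurable q)
    (hp1 : ∫ u, p u = 1) (hq1 : ∫ u, q u = 1)
    (hpint : Integrable p) (hqint : Integrable q)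
    (habs : ∀ u, q u = 0 → p u = 0)
    (h : EuclideanSpace ℝ (Fin d) → EuclideanSpace ℝ (Fin D))
    (hmeas : Measurable h) (hhB : ∀ u, ‖h u‖ ≤ B)
    (m : EuclideanSpace ℝ (Fin D)) (hm : m = ∫ u, p u • h u)
    (D2 : ℝ) (hD2 : D2 = ∫ u, (p u) ^ 2 / q u)
    (hD2int : Integrable (fun u => (p u) ^ 2 / q u)) :
    (∫ U : Fin K → EuclideanSpace ℝ (Fin d),
        ‖((1 / (K : ℝ)) * ∑ i, p (U i) / q (U i))⁻¹ •
            ((1 / (K : ℝ)) • ∑ i, (p (U i) / q (U i)) • h (U i)) - m‖ ^ 2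
      ∂(Measure.pi fun _ => volume.withDensity fun u => ENNReal.ofReal (q u)))
    ≤ 32 * B ^ 2 / (K : ℝ) * D2 :=
  snis_error_bound_general hK B p q hp0 hq0 hpmeas hqmeas hp1 hq1 hqint habs h hmeas hhB m hm D2 hD2
    hD2int
end

section
/- QMC score discrepancy via Koksma–Hlawka: Under the assumptions of Lemma 2 of the paper, if f₀, f₁,ᵣ : [0,1]^d → ℝ satisfy the Koksma–Hlawka bounds |(1/K)Σⱼ g(zⱼ) − ∫g| ≤ V_HK(g) D*(P_K) for g ∈ {f₀, f₁,₁,…,f₁,_D}, if V_HK(f₀) D*(P_K) ≤ I₀/2 where I₀ = ∫f₀, and if the score estimators s̃ and the exact score s satisfy s̃ − s = (α_t/σ_t²)(m̃ − m) with m = I₁/I₀ (I₁ the vector of ∫f₁,ᵣ) and m̃ the ratio of the corresponding QMC averages, then ‖s̃(y_t) − s(y_t)‖₂ ≤ (2α_t/(σ_t² I₀))(V_HK(f₁) + ‖m‖₂ V_HK(f₀)) D*(P_K), where V_HK(f₁) = Σᵣ V_HK(f₁,ᵣ). -/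
/-! The QMC mean `m̃` is a ratio of two QMC averages. The half-mass condition keeps the
denominator above `I₀ / 2`, so the error of the ratio is at most `2 / I₀` times the error of
the numerator plus `‖m‖` times the error of the denominator; Koksma–Hlawka bounds both (the
vector numerator coordinatewise, through `‖·‖₂ ≤ ‖·‖₁`). The score error is the mean error
scaled by `α_t / σ_t²`. -/

open Finset

theorem OrthonormalBasis.norm_le_sum_norm_repr {ι 𝕜 E : Type*} [Fintype ι] [RCLike 𝕜]
    [NormedAddCommGroup E] [InnerProductSpace 𝕜 E] (b : OrthonormalBasis ι 𝕜 E) (x : E) :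
    ‖x‖ ≤ ∑ i, ‖b.repr x i‖ :=
  calc ‖x‖ = ‖∑ i, b.repr x i • b i‖ := by rw [b.sum_repr]
    _ ≤ ∑ i, ‖b.repr x i • b i‖ := norm_sum_le _ _
    _ = ∑ i, ‖b.repr x i‖ := by simp only [norm_smul, b.orthonormal.1, mul_one]

theorem EuclideanSpace.norm_le_sum_norm {ι 𝕜 : Type*} [Fintype ι] [RCLike 𝕜]
    (x : EuclideanSpace 𝕜 ι) : ‖x‖ ≤ ∑ i, ‖x i‖ :=
  (EuclideanSpace.basisFun ι 𝕜).norm_le_sum_norm_repr x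

theorem norm_inv_smul_sub_inv_smul_le {𝕜 E : Type*} [NormedField 𝕜] [NormedAddCommGroup E]
    [NormedSpace 𝕜 E] {a c : 𝕜} (ha : a ≠ 0) (hc : c ≠ 0) (u v : E) :
    ‖a⁻¹ • u - c⁻¹ • v‖ ≤ ‖a‖⁻¹ * (‖u - v‖ + ‖c - a‖ * ‖c⁻¹ • v‖) := by
  have hsplit : a⁻¹ • u - c⁻¹ • v = a⁻¹ • ((u - v) + (c - a) • c⁻¹ • v) := by
    rw [sub_smul, smul_smul c, mul_inv_cancel₀ hc, one_smul, smul_smul a, smul_add, smul_sub,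
      smul_sub, smul_smul a⁻¹, ← mul_assoc, inv_mul_cancel₀ ha, one_mul]
    abel
  rw [hsplit, norm_smul, norm_inv]
  gcongr
  exact (norm_add_le _ _).trans_eq (by rw [norm_smul])

theorem qmc_score_discrepancy_general {d D K : ℕ}
    (αt σt Dstar V0 I0 : ℝ) (V1 : Fin D → ℝ)
    (hα : 0 < αt) (hI0 : 0 < I0)
    (z : Fin K → (Fin d → ℝ))
    (f0 : (Fin d → ℝ) → ℝ) (f1 : (Fin d → ℝ) → EuclideanSpace ℝ (Fin D))
    (I1 : EuclideanSpace ℝ (Fin D))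
    -- Koksma–Hlawka inequality for `f₀` and for each coordinate of `f₁`:
    (hKH0 : |(1 / (K : ℝ)) * ∑ j, f0 (z j) - I0| ≤ V0 * Dstar)
    (hKH1 : ∀ r : Fin D, |(1 / (K : ℝ)) * ∑ j, f1 (z j) r - I1 r| ≤ V1 r * Dstar)
    (hhalf : V0 * Dstar ≤ I0 / 2)
    (yt : EuclideanSpace ℝ (Fin D))
    (m mtilde : EuclideanSpace ℝ (Fin D))
    (hm : m = I0⁻¹ • I1)
    (hmt : mtilde = ((1 / (K : ℝ)) * ∑ j, f0 (z j))⁻¹ •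
      ((1 / (K : ℝ)) • ∑ j, f1 (z j)))
    (stilde sc : EuclideanSpace ℝ (Fin D))
    (hst : stilde = (σt ^ 2)⁻¹ • (αt • mtilde - yt))
    (hsc : sc = (σt ^ 2)⁻¹ • (αt • m - yt)) :
    ‖stilde - sc‖ ≤ (2 * αt / (σt ^ 2 * I0)) * ((∑ r, V1 r) + ‖m‖ * V0) * Dstar := by
  set A : ℝ := (1 / (K : ℝ)) * ∑ j, f0 (z j)
  set B : EuclideanSpace ℝ (Fin D) := (1 / (K : ℝ)) • ∑ j, f1 (z j)
  have hA : I0 / 2 ≤ A := by linarith [(abs_le.mp hKH0).1]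
  have hA_inv : |A|⁻¹ ≤ 2 / I0 := by
    rw [abs_of_pos (by linarith), ← inv_div]
    exact inv_anti₀ (by positivity) hA
  have hB : ‖B - I1‖ ≤ (∑ r, V1 r) * Dstar :=
    calc ‖B - I1‖ ≤ ∑ r, ‖(B - I1) r‖ := EuclideanSpace.norm_le_sum_norm _
      _ ≤ ∑ r, V1 r * Dstar := sum_le_sum fun r _ => by simpa [B] using hKH1 r
      _ = (∑ r, V1 r) * Dstar := by rw [sum_mul]
  have hmean : ‖mtilde - m‖ ≤ |A|⁻¹ * (‖B - I1‖ + |I0 - A| * ‖m‖) := by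
    rw [hmt, hm]
    exact norm_inv_smul_sub_inv_smul_le (by linarith) hI0.ne' B I1
  have hscore : stilde - sc = ((σt ^ 2)⁻¹ * αt) • (mtilde - m) := by
    rw [hst, hsc, ← smul_sub, sub_sub_sub_cancel_right, ← smul_sub, smul_smul]
  calc ‖stilde - sc‖ = (σt ^ 2)⁻¹ * αt * ‖mtilde - m‖ := by
        rw [hscore, norm_smul, Real.norm_of_nonneg (by positivity)]
    _ ≤ (σt ^ 2)⁻¹ * αt * (2 / I0 * ((∑ r, V1 r) * Dstar + V0 * Dstar * ‖m‖)) := by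
        grw [hmean, hA_inv, hB, abs_sub_comm, hKH0]
    _ = (2 * αt / (σt ^ 2 * I0)) * ((∑ r, V1 r) + ‖m‖ * V0) * Dstar := by ring

/-- QMC score discrepancy via Koksma–Hlawka: assuming the Koksma–Hlawka bounds for
`f₀` and each coordinate of `f₁`, the half-mass condition `V_HK(f₀) D*(P_K) ≤ I₀/2`,
and the score-to-mean identities `s̃ = (α_t/σ_t²)(α_t m̃ − y)`-style relations,
`‖s̃(y_t) − s(y_t)‖ ≤ (2α_t/(σ_t² I₀)) (V_HK(f₁) + ‖m‖ V_HK(f₀)) D*(P_K)`. -/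
theorem qmc_score_discrepancy {d D K : ℕ} (hK : 0 < K)
    (αt σt Dstar V0 I0 : ℝ) (V1 : Fin D → ℝ)
    (hα : 0 < αt) (hσ : 0 < σt) (hDstar : 0 ≤ Dstar) (hI0 : 0 < I0)
    (z : Fin K → (Fin d → ℝ))
    (f0 : (Fin d → ℝ) → ℝ) (f1 : (Fin d → ℝ) → EuclideanSpace ℝ (Fin D))
    (I1 : EuclideanSpace ℝ (Fin D))
    (hf0pos : ∀ w, 0 ≤ f0 w)
    -- Koksma–Hlawka inequality for `f₀` and for each coordinate of `f₁`:
    (hKH0 : |(1 / (K : ℝ)) * ∑ j, f0 (z j) - I0| ≤ V0 * Dstar)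
    (hKH1 : ∀ r : Fin D, |(1 / (K : ℝ)) * ∑ j, f1 (z j) r - I1 r| ≤ V1 r * Dstar)
    (hhalf : V0 * Dstar ≤ I0 / 2)
    (yt : EuclideanSpace ℝ (Fin D))
    (m mtilde : EuclideanSpace ℝ (Fin D))
    (hm : m = I0⁻¹ • I1)
    (hmt : mtilde = ((1 / (K : ℝ)) * ∑ j, f0 (z j))⁻¹ •
      ((1 / (K : ℝ)) • ∑ j, f1 (z j)))
    (stilde sc : EuclideanSpace ℝ (Fin D))
    (hst : stilde = (σt ^ 2)⁻¹ • (αt • mtilde - yt))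
    (hsc : sc = (σt ^ 2)⁻¹ • (αt • m - yt)) :
    ‖stilde - sc‖ ≤ (2 * αt / (σt ^ 2 * I0)) * ((∑ r, V1 r) + ‖m‖ * V0) * Dstar :=
  qmc_score_discrepancy_general αt σt Dstar V0 I0 V1 hα hI0 z f0 f1 I1 hKH0 hKH1 hhalf yt m mtilde
    hm hmt stilde sc hst hsc
end
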